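/- For a prime p and r ≥ 2, the series G_r^p(x) = exp(-∑_{n ≥ 1} (pn)_p^{r-1} x^n/n) satisfies the functional equation G_r^p(x) = (Q_p(x) · G_r^p(x^p))^{p^{r-2}}, where Q_p(x) = (1-x)^p/(1-x^p). -/

import Mathlib

open PowerSeries

/-- The formal exponential `exp f = ∑ₖ f^k / k!` of a power series `f` (with zero constant term). -/
noncomputable def expPS (f : PowerSeries ℚ) : PowerSeries ℚ :=
  PowerSeries.mk fun n =>
    ∑ k ∈ Finset.range (n + 1), (PowerSeries.coeff n (f ^ k)) / (Nat.factorial k)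

/-- The series `∑_{n ≥ 1} a n * x^n / n`. -/
noncomputable def serA (a : ℕ → ℚ) : PowerSeries ℚ :=
  PowerSeries.mk fun n => if n = 0 then 0 else a n / n

/-- The substitution `x ↦ x^p` in a formal power series. -/
noncomputable def powSubst (f : PowerSeries ℚ) (p : ℕ) : PowerSeries ℚ :=
  PowerSeries.mk fun n => if p ∣ n then PowerSeries.coeff (n / p) f else 0

/-- The series `G_r^p(x) = exp (-∑_{n ≥ 1} (p n)_p^(r-1) x^n / n)`,
where `(p n)_p = p^(1 + ν_p n)`. -/
noncomputable def Gser (p r : ℕ) : PowerSeries ℚ :=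
  expPS (serA fun n => -((p : ℚ) ^ ((1 + padicValNat p n) * (r - 1))))

/-!
Both sides have constant term `1`, so it suffices that they have the same logarithmic derivative
for the Euler operator `θ = X d/dX`, which turns products into sums and powers into multiples,
and satisfies `θ (F(x^p)) = p (θ F)(x^p)`. As `θ log G_r^p = ∑ -(p n)_p^(r-1) x^n` and
`θ log (1 - x) = -∑_{n ≥ 1} x^n`, this becomes a coefficientwise identity: for `p ∤ n` both sides
are `-p^(r-1)`, and for `n = p m` it follows from `(p · p m)_p = p · (p m)_p`.
-/

theorem coeff_pow_eq_zero_of_lt {R : Type*} [CommRing R] {f : R⟦X⟧} (hf : constantCoeff f = 0)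
    {n k : ℕ} (h : n < k) : coeff n (f ^ k) = 0 :=
  X_pow_dvd_iff.mp (pow_dvd_pow_of_dvd (X_dvd_iff.mpr hf) k) n h

theorem expPS_eq_subst_exp {f : ℚ⟦X⟧} (hf : constantCoeff f = 0) :
    expPS f = (exp ℚ).subst f := by
  ext n
  rw [expPS, coeff_mk, coeff_subst' (.of_constantCoeff_zero' hf),
    finsum_eq_sum_of_support_subset (s := Finset.range (n + 1))]
  · refine Finset.sum_congr rfl fun k _ => ?_
    simp [coeff_exp, div_eq_inv_mul]
  · intro k hk
    rw [Function.mem_support] at hk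
    rw [Finset.coe_range, Set.mem_Iio, Nat.lt_succ_iff]
    by_contra! hnk
    exact hk (by rw [coeff_pow_eq_zero_of_lt hf hnk, smul_zero])

theorem constantCoeff_expPS (f : ℚ⟦X⟧) : constantCoeff (expPS f) = 1 := by
  rw [← coeff_zero_eq_constantCoeff_apply, expPS, coeff_mk]
  simp

theorem constantCoeff_Gser (p r : ℕ) : constantCoeff (Gser p r) = 1 :=
  constantCoeff_expPS _

theorem constantCoeff_serA (a : ℕ → ℚ) : constantCoeff (serA a) = 0 := by
  rw [← coeff_zero_eq_constantCoeff_apply, serA, coeff_mk, if_pos rfl]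

noncomputable def eulerSer (a : ℕ → ℚ) : ℚ⟦X⟧ :=
  mk fun n => if n = 0 then 0 else a n

theorem coeff_eulerSer (a : ℕ → ℚ) (n : ℕ) :
    coeff n (eulerSer a) = if n = 0 then 0 else a n :=
  coeff_mk _ _

theorem X_mul_derivative_serA (a : ℕ → ℚ) : X * d⁄dX ℚ (serA a) = eulerSer a := by
  ext (_ | n)
  · simp [eulerSer]
  · rw [coeff_succ_X_mul, coeff_derivative, serA, eulerSer, coeff_mk, coeff_mk,
      if_neg n.succ_ne_zero, if_neg n.succ_ne_zero]
    field_simp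
    push_cast
    ring

theorem powSubst_eq_expand (f : ℚ⟦X⟧) {p : ℕ} (hp : p ≠ 0) : powSubst f p = expand p hp f := by
  ext n
  rw [powSubst, coeff_mk, coeff_expand]

section LogEulerDeriv

variable {R : Type*}

/-- `g = X F' / F`, the logarithmic derivative of `F` for the Euler operator `X d/dX`. -/
def HasLogEulerDeriv [CommRing R] (F g : R⟦X⟧) : Prop :=
  X * d⁄dX R F = g * F

namespace HasLogEulerDeriv

variable {F H g h : R⟦X⟧}

theorem mul [CommRing R] (hF : HasLogEulerDeriv F g) (hH : HasLogEulerDeriv H h) :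
    HasLogEulerDeriv (F * H) (g + h) := by
  unfold HasLogEulerDeriv at *
  rw [Derivation.leibniz, smul_eq_mul, smul_eq_mul]
  linear_combination H * hF + F * hH

theorem pow [CommRing R] (hF : HasLogEulerDeriv F g) (n : ℕ) :
    HasLogEulerDeriv (F ^ n) (n • g) := by
  induction n with
  | zero => simp [HasLogEulerDeriv]
  | succ n ih => rw [pow_succ, succ_nsmul]; exact ih.mul hF

theorem inv [Field R] (hF : HasLogEulerDeriv F g) (hF0 : constantCoeff F ≠ 0) :
    HasLogEulerDeriv F⁻¹ (-g) := by
  unfold HasLogEulerDeriv at *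
  rw [derivative_inv']
  linear_combination (-F⁻¹ ^ 2) * hF + (-g * F⁻¹) * PowerSeries.inv_mul_cancel F hF0

theorem expand [CommRing R] (hF : HasLogEulerDeriv F g) (p : ℕ) (hp : p ≠ 0) :
    HasLogEulerDeriv (expand p hp F) (p • expand p hp g) := by
  unfold HasLogEulerDeriv at *
  obtain ⟨q, rfl⟩ := Nat.exists_eq_succ_of_ne_zero hp
  rw [expand_apply, derivative_subst (.X_pow hp), ← expand_apply _ hp, ← expand_apply _ hp,
    derivative_pow, derivative_X, Nat.succ_sub_one]
  calc _ = (q.succ : R⟦X⟧) * PowerSeries.expand _ hp (X * d⁄dX R F) := by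
        rw [map_mul, expand_X, pow_succ']; ring
    _ = _ := by rw [hF, map_mul, nsmul_eq_mul, mul_assoc]

theorem eq_of_constantCoeff_eq [Field R] [CharZero R] (hF : HasLogEulerDeriv F g)
    (hH : HasLogEulerDeriv H g) (h0 : constantCoeff F = constantCoeff H)
    (hH0 : constantCoeff H ≠ 0) : F = H := by
  have hquot : d⁄dX R (F * H⁻¹) = 0 := by
    have := hF.mul (hH.inv hH0)
    rw [HasLogEulerDeriv, add_neg_cancel, zero_mul] at this
    exact (mul_eq_zero.mp this).resolve_left X_ne_zero
  have hone : F * H⁻¹ = 1 := by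
    refine derivative.ext (by rw [hquot, derivative_one]) ?_
    rw [map_mul, constantCoeff_inv, h0, mul_inv_cancel₀ hH0, map_one]
  calc F = F * H⁻¹ * H := by rw [mul_assoc, PowerSeries.inv_mul_cancel H hH0, mul_one]
    _ = H := by rw [hone, one_mul]

end HasLogEulerDeriv

end LogEulerDeriv

theorem hasLogEulerDeriv_expPS {f : ℚ⟦X⟧} (hf : constantCoeff f = 0) :
    HasLogEulerDeriv (expPS f) (X * d⁄dX ℚ f) := by
  rw [HasLogEulerDeriv, expPS_eq_subst_exp hf, derivative_subst (.of_constantCoeff_zero' hf),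
    derivative_exp]
  ring

theorem hasLogEulerDeriv_one_sub_X : HasLogEulerDeriv (1 - X : ℚ⟦X⟧) (-eulerSer 1) := by
  have h : eulerSer 1 = X * mk 1 := by
    ext (_ | n) <;> simp [eulerSer, coeff_succ_X_mul]
  rw [HasLogEulerDeriv, h, map_sub, derivative_one, derivative_X, neg_mul, mul_assoc,
    mk_one_mul_one_sub_eq_one]
  ring

/-- `n ↦ -(p n)_p ^ k`, where `(m)_p` is the largest power of `p` dividing `m`. -/
noncomputable def negPadicPartPow (p k n : ℕ) : ℚ :=
  -((p : ℚ) ^ ((1 + padicValNat p n) * k))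

theorem eulerSer_negPadicPartPow {p : ℕ} (hp : p.Prime) (k : ℕ) :
    eulerSer (negPadicPartPow p k) =
      p ^ k • (expand p hp.ne_zero (eulerSer 1 + eulerSer (negPadicPartPow p k)) - eulerSer 1) := by
  have := Fact.mk hp
  ext n
  rw [map_nsmul, map_sub, coeff_expand, coeff_eulerSer, coeff_eulerSer, nsmul_eq_mul]
  rcases eq_or_ne n 0 with rfl | hn
  · rw [if_pos (dvd_zero p), Nat.zero_div, map_add, coeff_eulerSer, coeff_eulerSer]
    simp
  by_cases hpn : p ∣ n
  · obtain ⟨m, rfl⟩ := hpn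
    have hm : m ≠ 0 := right_ne_zero_of_mul hn
    rw [if_pos (dvd_mul_right p m), Nat.mul_div_cancel_left m hp.pos, map_add, coeff_eulerSer,
      coeff_eulerSer, if_neg hn, if_neg hn, if_neg hm, if_neg hm, negPadicPartPow, negPadicPartPow,
      padicValNat.mul hp.ne_zero hm, padicValNat.self hp.one_lt, Pi.one_apply, Pi.one_apply]
    push_cast
    ring
  · rw [if_neg hn, if_neg hn, if_neg hpn, negPadicPartPow, padicValNat.eq_zero_of_not_dvd hpn,
      Pi.one_apply]
    push_cast
    ring

/-- The functional equation `G_r^p(x) = (Q_p(x) G_r^p(x^p))^(p^(r-2))` with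
`Q_p(x) = (1-x)^p/(1-x^p)`. -/
theorem stmt_17 (p : ℕ) (hp : p.Prime) (r : ℕ) (hr : 2 ≤ r) :
    Gser p r = (((1 : PowerSeries ℚ) - PowerSeries.X) ^ p *
        ((1 : PowerSeries ℚ) - PowerSeries.X ^ p)⁻¹ *
        powSubst (Gser p r) p) ^ (p ^ (r - 2)) := by
  obtain ⟨k, rfl⟩ : ∃ k, r = k + 2 := ⟨r - 2, by omega⟩
  have hp0 := hp.ne_zero
  have hG : HasLogEulerDeriv (Gser p (k + 2)) (eulerSer (negPadicPartPow p (k + 1))) := by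
    rw [← X_mul_derivative_serA]
    exact hasLogEulerDeriv_expPS (constantCoeff_serA _)
  have hu := hasLogEulerDeriv_one_sub_X
  have hRHS : HasLogEulerDeriv (((1 - X) ^ p * (expand p hp0 (1 - X))⁻¹ *
      expand p hp0 (Gser p (k + 2))) ^ p ^ k) (eulerSer (negPadicPartPow p (k + 1))) := by
    convert (((hu.pow p).mul ((hu.expand p hp0).inv (by simp [hp0]))).mul
      (hG.expand p hp0)).pow (p ^ k) using 1
    conv_lhs => rw [eulerSer_negPadicPartPow hp]
    simp only [map_add, map_neg, pow_succ, mul_nsmul]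
    module
  rw [Nat.add_sub_cancel, powSubst_eq_expand _ hp0,
    show (1 - X ^ p : ℚ⟦X⟧) = expand p hp0 (1 - X) by simp]
  exact hG.eq_of_constantCoeff_eq hRHS (by simp [constantCoeff_Gser, hp0])
    (by simp [constantCoeff_Gser, hp0])
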